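/- arXiv:2102.10778 — 2 statements merged into one kernel-verified Lean document; each statement's English description precedes it below -/
import Mathlib

section
/- Let Y^T and Y^C be real random variables such that Y^T is stochastically dominated by Y^C (i.e., P(Y^T ≤ y) ≥ P(Y^C ≤ y) for all y), and let A be Bernoulli(1/2) independent of (Y^T, Y^C). Define Y = A·Y^T + (1-A)·Y^C. Then for any fixed real constant m, P((A - 1/2)(Y - m) > 0) ≤ 1/2. -/
/-!
On `{A = 1}` the event is `{m < Y^T}` and on `{A = 0}` it is `{Y^C < m}`, so by independence its
probability is `(P(m < Y^T) + P(Y^C < m)) / 2`; dominance gives `P(Y^C < m) ≤ P(Y^T ≤ m)`, whence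
the bracket is at most `1`.
-/

open MeasureTheory ProbabilityTheory Set

lemma sub_half_mul_pos_iff {a t c m : ℝ} (ha : a = 0 ∨ a = 1) :
    0 < (a - 1/2) * (a * t + (1 - a) * c - m) ↔ (a = 1 ∧ m < t) ∨ (a = 0 ∧ c < m) := by
  rcases ha with rfl | rfl <;> constructor <;> intro h <;> norm_num at h ⊢ <;> linarith

section Probability

variable {Ω : Type*} [MeasurableSpace Ω] {μ : Measure Ω} [IsProbabilityMeasure μ]

lemma measure_lt_add_measure_gt_le_one_of_dominated {X Y : Ω → ℝ} (hX : Measurable X)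
    (hdom : ∀ y, μ {ω | Y ω ≤ y} ≤ μ {ω | X ω ≤ y}) (m : ℝ) :
    μ {ω | m < X ω} + μ {ω | Y ω < m} ≤ 1 :=
  calc μ {ω | m < X ω} + μ {ω | Y ω < m} ≤ μ {ω | X ω ≤ m}ᶜ + μ {ω | X ω ≤ m} := by
        refine add_le_add (measure_mono fun ω => ?_) ?_
        · simp
        · exact (measure_mono fun ω (h : Y ω < m) => h.le).trans (hdom m)
    _ = 1 := by rw [add_comm, prob_add_prob_compl (measurableSet_le hX measurable_const)]

lemma measure_eq_zero_eq_half {A : Ω → ℝ} (hA : Measurable A) (hA01 : ∀ ω, A ω = 0 ∨ A ω = 1)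
    (hBer : μ {ω | A ω = 1} = 1/2) : μ {ω | A ω = 0} = 1/2 := by
  have hcompl : {ω | A ω = 0} = {ω | A ω = 1}ᶜ := by
    ext ω; rcases hA01 ω with h | h <;> simp [h]
  rw [hcompl, prob_compl_eq_one_sub (measurableSet_eq_fun hA measurable_const), hBer, one_div,
    ENNReal.one_sub_inv_two]

end Probability

theorem stmt_2_general {Ω : Type*} [MeasurableSpace Ω] (μ : Measure Ω) [IsProbabilityMeasure μ]
    (YT YC A : Ω → ℝ) (hYT : Measurable YT) (hA : Measurable A)
    (hdom : ∀ y : ℝ, μ {ω | YC ω ≤ y} ≤ μ {ω | YT ω ≤ y})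
    (hA01 : ∀ ω, A ω = 0 ∨ A ω = 1)
    (hBer : μ {ω | A ω = 1} = 1/2)
    (hindep : IndepFun A (fun ω => (YT ω, YC ω)) μ)
    (Y : Ω → ℝ) (hY : ∀ ω, Y ω = A ω * YT ω + (1 - A ω) * YC ω)
    (m : ℝ) :
    μ {ω | 0 < (A ω - 1/2) * (Y ω - m)} ≤ 1/2 := by
  have hevent : {ω | 0 < (A ω - 1/2) * (Y ω - m)} =
      ({ω | A ω = 1} ∩ {ω | m < YT ω}) ∪ ({ω | A ω = 0} ∩ {ω | YC ω < m}) := by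
    ext ω
    simp only [mem_ofPred_eq, mem_union, mem_inter_iff, hY, sub_half_mul_pos_iff (hA01 ω)]
  have htreated : μ ({ω | A ω = 1} ∩ {ω | m < YT ω}) = 1/2 * μ {ω | m < YT ω} := by
    rw [← hBer]
    exact hindep.measure_inter_preimage_eq_mul {1} {x | m < x.1}
      (measurableSet_singleton 1) (measurableSet_lt measurable_const measurable_fst)
  have hcontrol : μ ({ω | A ω = 0} ∩ {ω | YC ω < m}) = 1/2 * μ {ω | YC ω < m} := by
    rw [← measure_eq_zero_eq_half hA hA01 hBer]
    exact hindep.measure_inter_preimage_eq_mul {0} {x | x.2 < m}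
      (measurableSet_singleton 0) (measurableSet_lt measurable_snd measurable_const)
  calc μ {ω | 0 < (A ω - 1/2) * (Y ω - m)}
      ≤ μ ({ω | A ω = 1} ∩ {ω | m < YT ω}) + μ ({ω | A ω = 0} ∩ {ω | YC ω < m}) :=
        hevent ▸ measure_union_le _ _
    _ = 1/2 * (μ {ω | m < YT ω} + μ {ω | YC ω < m}) := by rw [htreated, hcontrol, mul_add]
    _ ≤ 1/2 * 1 := by gcongr; exact measure_lt_add_measure_gt_le_one_of_dominated hYT hdom m
    _ = 1/2 := mul_one _

/-- If `Y^T` is stochastically dominated by `Y^C`, `A` is Bernoulli(1/2) independent of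
the pair `(Y^T, Y^C)`, and `Y = A·Y^T + (1-A)·Y^C`, then for any fixed real `m`,
`P((A - 1/2)(Y - m) > 0) ≤ 1/2`. -/
theorem stmt_2 {Ω : Type*} [MeasurableSpace Ω] (μ : Measure Ω) [IsProbabilityMeasure μ]
    (YT YC A : Ω → ℝ) (hYT : Measurable YT) (hYC : Measurable YC) (hA : Measurable A)
    (hdom : ∀ y : ℝ, μ {ω | YC ω ≤ y} ≤ μ {ω | YT ω ≤ y})
    (hA01 : ∀ ω, A ω = 0 ∨ A ω = 1)
    (hBer : μ {ω | A ω = 1} = 1/2)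
    (hindep : IndepFun A (fun ω => (YT ω, YC ω)) μ)
    (Y : Ω → ℝ) (hY : ∀ ω, Y ω = A ω * YT ω + (1 - A ω) * YC ω)
    (m : ℝ) :
    μ {ω | 0 < (A ω - 1/2) * (Y ω - m)} ≤ 1/2 :=
  stmt_2_general μ YT YC A hYT hA hdom hA01 hBer hindep Y hY m
end

section
/- Suppose finite sets of rejections R(I) ⊆ I and R(II) ⊆ II with false-rejection subsets V(I) ⊆ R(I), V(II) ⊆ R(II), where I and II are disjoint, satisfy E[|V(I)|/max(|R(I)|,1)] ≤ α/2 and E[|V(II)|/max(|R(II)|,1)] ≤ α/2. Then E[|V(I) ∪ V(II)| / max(|R(I) ∪ R(II)|,1)] ≤ α. -/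
open MeasureTheory ProbabilityTheory
open scoped ENNReal

/-- Cross-fitting FDR combination: if the rejection sets on the two disjoint halves each
have FDR at most `α/2`, then the union has FDR at most `α`. -/
theorem stmt_4 {Ω : Type*} [MeasurableSpace Ω] (μ : Measure Ω) [IsProbabilityMeasure μ]
    (I II : Finset ℕ) (hdisj : Disjoint I II)
    (RI RII VI VII : Ω → Finset ℕ)
    (hRI : ∀ ω, RI ω ⊆ I) (hRII : ∀ ω, RII ω ⊆ II)
    (hVI : ∀ ω, VI ω ⊆ RI ω) (hVII : ∀ ω, VII ω ⊆ RII ω)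
    (hintI : Integrable (fun ω => ((VI ω).card : ℝ) / max ((RI ω).card : ℝ) 1) μ)
    (hintII : Integrable (fun ω => ((VII ω).card : ℝ) / max ((RII ω).card : ℝ) 1) μ)
    (hintU : Integrable
      (fun ω => (((VI ω) ∪ (VII ω)).card : ℝ) / max (((RI ω) ∪ (RII ω)).card : ℝ) 1) μ)
    (α : ℝ)
    (hFDRI : ∫ ω, ((VI ω).card : ℝ) / max ((RI ω).card : ℝ) 1 ∂μ ≤ α / 2)
    (hFDRII : ∫ ω, ((VII ω).card : ℝ) / max ((RII ω).card : ℝ) 1 ∂μ ≤ α / 2) :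
    ∫ ω, (((VI ω) ∪ (VII ω)).card : ℝ) / max (((RI ω) ∪ (RII ω)).card : ℝ) 1 ∂μ ≤ α := by
  have key : ∀ ω, (((VI ω) ∪ (VII ω)).card : ℝ) / max (((RI ω) ∪ (RII ω)).card : ℝ) 1
      ≤ ((VI ω).card : ℝ) / max ((RI ω).card : ℝ) 1
        + ((VII ω).card : ℝ) / max ((RII ω).card : ℝ) 1 := by
    intro ω
    have hVdisj : Disjoint (VI ω) (VII ω) :=
      (hdisj.mono ((hVI ω).trans (hRI ω)) ((hVII ω).trans (hRII ω)))
    have hcard : ((VI ω ∪ VII ω).card : ℝ) = (VI ω).card + (VII ω).card := by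
      rw [Finset.card_union_of_disjoint hVdisj]; push_cast; ring
    set t : ℝ := max (((RI ω) ∪ (RII ω)).card : ℝ) 1 with ht
    have htpos : (0:ℝ) < t := lt_of_lt_of_le one_pos (le_max_right _ _)
    have h1 : max ((RI ω).card : ℝ) 1 ≤ t := by
      apply max_le_max _ le_rfl
      exact_mod_cast Finset.card_le_card Finset.subset_union_left
    have h2 : max ((RII ω).card : ℝ) 1 ≤ t := by
      apply max_le_max _ le_rfl
      exact_mod_cast Finset.card_le_card Finset.subset_union_right
    have hr1 : (0:ℝ) < max ((RI ω).card : ℝ) 1 := lt_of_lt_of_le one_pos (le_max_right _ _)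
    have hr2 : (0:ℝ) < max ((RII ω).card : ℝ) 1 := lt_of_lt_of_le one_pos (le_max_right _ _)
    rw [hcard, add_div]
    gcongr
  calc ∫ ω, (((VI ω) ∪ (VII ω)).card : ℝ) / max (((RI ω) ∪ (RII ω)).card : ℝ) 1 ∂μ
      ≤ ∫ ω, (((VI ω).card : ℝ) / max ((RI ω).card : ℝ) 1
          + ((VII ω).card : ℝ) / max ((RII ω).card : ℝ) 1) ∂μ :=
        integral_mono hintU (hintI.add hintII) key
    _ = (∫ ω, ((VI ω).card : ℝ) / max ((RI ω).card : ℝ) 1 ∂μ)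
        + ∫ ω, ((VII ω).card : ℝ) / max ((RII ω).card : ℝ) 1 ∂μ :=
        integral_add hintI hintII
    _ ≤ α / 2 + α / 2 := add_le_add hFDRI hFDRII
    _ = α := by ring
end
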